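/- arXiv:1609.09703 — 3 statements merged into one kernel-verified Lean document; each statement's English description precedes it below -/
import Mathlib

section
/- For every ε ∈ (0,1) there exists a constant C > 0 such that for every integer m and every real t ≥ 1 with |m − t| < ε·t, one has |J_m(t)| ≤ C · t^{−1/4} · (t^{1/3} + |m − t|)^{−1/4}. -/
open MeasureTheory

/-- The Bessel function `J_m(t) = (1/2π)∫₀^{2π} e^{-imk - i t sin k} dk` for `m ∈ ℤ`. -/
noncomputable def besselJ (m : ℤ) (t : ℝ) : ℂ :=
  (1 / (2 * Real.pi)) * ∫ k in (0:ℝ)..(2 * Real.pi),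
    Complex.exp (-Complex.I * m * k - Complex.I * t * Real.sin k)

/-!
The substitution `k ↦ 2π - k` conjugates the integrand, so `‖J_m(t)‖ ≤ ‖∫₀^π e^{iφ}‖` for the
phase `φ(k) = -(m k + t sin k)`, with `φ' = -(m + t cos k)` and `φ'' = t sin k ≥ 0` on `[0, π]`.
On `[0, π/2]` the first-derivative van der Corput estimate gives `O(1/m)`, and on `[π/2, π - r]`
the second-derivative estimate (`φ'' ≥ t r / 2`) gives `O((t r)^{-1/2})`. Near the stationary
point `π`, where `φ'(π) = t - m`, the window `[π - r, π]` is estimated trivially with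
`r = t^{-1/3}` when `|m - t| ≤ t^{1/3}`; otherwise `|φ'| ≳ |m - t|` there, for `r = π/2` when
`m > t` and for `r = √((t - m)/t)` when `m < t`, and the first-derivative estimate applies again.
-/

open Real Set intervalIntegral
open Complex (I I_ne_zero I_sq norm_I ofReal_ne_zero norm_real norm_exp_ofReal_mul_I exp_conj
  conj_ofReal conj_I exp_int_mul_two_pi_mul_I)
open scoped Complex ComplexConjugate

lemma norm_integral_cexp_le_sub {φ : ℝ → ℝ} {a b : ℝ} (hab : a ≤ b) :
    ‖∫ x in a..b, cexp (φ x * I)‖ ≤ b - a := by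
  refine (norm_integral_le_of_norm_le_const fun x _ => (norm_exp_ofReal_mul_I _).le).trans_eq ?_
  rw [one_mul, abs_of_nonneg (sub_nonneg.2 hab)]

theorem integral_cexp_eq_of_deriv_ne_zero {φ φ' φ'' : ℝ → ℝ} {a b : ℝ}
    (hφ : ∀ x, HasDerivAt φ (φ' x) x) (hφ' : ∀ x, HasDerivAt φ' (φ'' x) x)
    (hφ'' : Continuous φ'') (hab : a ≤ b) (hne : ∀ x ∈ Icc a b, φ' x ≠ 0) :
    ∫ x in a..b, cexp (φ x * I) =
      cexp (φ b * I) / (φ' b * I) - cexp (φ a * I) / (φ' a * I) -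
        ∫ x in a..b, cexp (φ x * I) * ((φ'' x / φ' x ^ 2 : ℝ) * I) := by
  have hcont : Continuous φ := continuous_iff_continuousAt.2 fun x => (hφ x).continuousAt
  have hcont' : Continuous φ' := continuous_iff_continuousAt.2 fun x => (hφ' x).continuousAt
  have he : Continuous fun x => cexp (φ x * I) := by fun_prop
  have hq : ContinuousOn (fun x => φ'' x / φ' x ^ 2) (uIcc a b) :=
    hφ''.continuousOn.div (hcont'.pow 2).continuousOn fun x hx =>
      pow_ne_zero 2 (hne x (uIcc_of_le hab ▸ hx))
  have hF : ContinuousOn (fun x => cexp (φ x * I) * ((φ'' x / φ' x ^ 2 : ℝ) * I)) (uIcc a b) := by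
    fun_prop
  rw [eq_sub_iff_add_eq, ← intervalIntegral.integral_add (he.intervalIntegrable a b)
    hF.intervalIntegrable, integral_eq_sub_of_hasDerivAt (fun x hx => ?_)
    ((he.intervalIntegrable a b).add hF.intervalIntegrable)]
  rw [uIcc_of_le hab] at hx
  have hx0 : (φ' x : ℂ) ≠ 0 := ofReal_ne_zero.2 (hne x hx)
  refine (((hφ x).ofReal_comp.mul_const I).cexp.div ((hφ' x).ofReal_comp.mul_const I)
    (mul_ne_zero hx0 I_ne_zero)).congr_deriv ?_
  push_cast
  field_simp
  ring_nf
  rw [I_sq]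
  ring

theorem integral_div_sq_eq_inv_sub_inv {f f' : ℝ → ℝ} {a b : ℝ}
    (hf : ∀ x, HasDerivAt f (f' x) x) (hf' : Continuous f') (hab : a ≤ b)
    (hne : ∀ x ∈ Icc a b, f x ≠ 0) :
    ∫ x in a..b, f' x / f x ^ 2 = (f a)⁻¹ - (f b)⁻¹ := by
  have hcont : Continuous f := continuous_iff_continuousAt.2 fun x => (hf x).continuousAt
  have hq : ContinuousOn (fun x => f' x / f x ^ 2) (uIcc a b) :=
    hf'.continuousOn.div (hcont.pow 2).continuousOn fun x hx =>
      pow_ne_zero 2 (hne x (uIcc_of_le hab ▸ hx))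
  rw [integral_eq_sub_of_hasDerivAt (f := fun x => -(f x)⁻¹) (fun x hx => ?_)
    hq.intervalIntegrable]
  · ring
  · rw [uIcc_of_le hab] at hx
    exact ((hf x).inv (hne x hx)).neg.congr_deriv (by ring)

theorem vanDerCorput_first_deriv {φ φ' φ'' : ℝ → ℝ} {a b lam : ℝ}
    (hφ : ∀ x, HasDerivAt φ (φ' x) x) (hφ' : ∀ x, HasDerivAt φ' (φ'' x) x)
    (hφ'' : Continuous φ'') (hab : a ≤ b) (hlam : 0 < lam)
    (hmono : ∀ x ∈ Icc a b, 0 ≤ φ'' x)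
    (hdir : (∀ x ∈ Icc a b, lam ≤ φ' x) ∨ ∀ x ∈ Icc a b, φ' x ≤ -lam) :
    ‖∫ x in a..b, cexp (φ x * I)‖ ≤ 3 / lam := by
  have ha : a ∈ Icc a b := left_mem_Icc.2 hab
  have hb : b ∈ Icc a b := right_mem_Icc.2 hab
  have hlam_le : ∀ x ∈ Icc a b, lam ≤ |φ' x| := by
    rcases hdir with h | h <;> intro x hx
    · exact (h x hx).trans (le_abs_self _)
    · exact (le_neg.1 (h x hx)).trans (neg_le_abs _)
  have hne : ∀ x ∈ Icc a b, φ' x ≠ 0 := fun x hx =>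
    abs_pos.1 (hlam.trans_le (hlam_le x hx))
  have hinv : ∀ x ∈ Icc a b, |(φ' x)⁻¹| ≤ lam⁻¹ := fun x hx => by
    rw [abs_inv]; exact inv_anti₀ hlam (hlam_le x hx)
  have hboundary : ∀ x ∈ Icc a b, ‖cexp (φ x * I) / (φ' x * I)‖ ≤ lam⁻¹ := fun x hx => by
    simpa [norm_exp_ofReal_mul_I] using hinv x hx
  -- `1 / φ'` is monotone and of constant sign, so its total variation is at most `1 / lam`
  have hvar : (φ' a)⁻¹ - (φ' b)⁻¹ ≤ lam⁻¹ := by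
    rcases hdir with h | h
    · linarith [(abs_le.1 (hinv a ha)).2, inv_pos.2 (hlam.trans_le (h b hb))]
    · have := inv_lt_zero.2 ((h a ha).trans_lt (neg_neg_iff_pos.2 hlam))
      linarith [(abs_le.1 (hinv b hb)).1]
  have hrem : ‖∫ x in a..b, cexp (φ x * I) * ((φ'' x / φ' x ^ 2 : ℝ) * I)‖ ≤ lam⁻¹ := by
    refine (intervalIntegral.norm_integral_le_integral_norm hab).trans (le_of_eq_of_le ?_ hvar)
    rw [← integral_div_sq_eq_inv_sub_inv hφ' hφ'' hab hne]
    refine integral_congr fun x hx => ?_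
    rw [uIcc_of_le hab] at hx
    simp only [norm_mul, norm_exp_ofReal_mul_I, norm_I, norm_real, Real.norm_eq_abs, one_mul,
      mul_one]
    exact abs_of_nonneg (by have := hmono x hx; positivity)
  rw [integral_cexp_eq_of_deriv_ne_zero hφ hφ' hφ'' hab hne]
  calc _ ≤ ‖cexp (φ b * I) / (φ' b * I)‖ + ‖cexp (φ a * I) / (φ' a * I)‖ +
        ‖∫ x in a..b, cexp (φ x * I) * ((φ'' x / φ' x ^ 2 : ℝ) * I)‖ :=
      (norm_sub_le _ _).trans (by gcongr; exact norm_sub_le _ _)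
    _ ≤ lam⁻¹ + lam⁻¹ + lam⁻¹ := by gcongr <;> exact hboundary _ ‹_›
    _ = 3 / lam := by ring

theorem exists_mem_Icc_of_le_deriv {f f' : ℝ → ℝ} {a b lam : ℝ}
    (hf : ∀ x, HasDerivAt f (f' x) x) (hab : a ≤ b) (hf' : ∀ x ∈ Icc a b, lam ≤ f' x) :
    ∃ c ∈ Icc a b, (∀ x ∈ Icc a b, x < c → f x ≤ lam * (x - c)) ∧
      ∀ x ∈ Icc a b, c < x → lam * (x - c) ≤ f x := by
  have hcont : Continuous f := continuous_iff_continuousAt.2 fun x => (hf x).continuousAt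
  have hslope : ∀ x ∈ Icc a b, ∀ y ∈ Icc a b, x ≤ y → lam * (y - x) ≤ f y - f x := by
    refine (convex_Icc a b).mul_sub_le_image_sub_of_le_deriv hcont.continuousOn
      (fun x _ => (hf x).differentiableAt.differentiableWithinAt) fun x hx => ?_
    rw [(hf x).deriv]
    exact hf' x (interior_subset hx)
  have ha : a ∈ Icc a b := left_mem_Icc.2 hab
  have hb : b ∈ Icc a b := right_mem_Icc.2 hab
  rcases le_or_gt 0 (f a) with ha0 | ha0
  · refine ⟨a, ha, fun x hx hxa => absurd hx.1 (not_le.2 hxa), fun x hx hax => ?_⟩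
    linarith [hslope a ha x hx hax.le]
  rcases le_or_gt (f b) 0 with hb0 | hb0
  · refine ⟨b, hb, fun x hx hxb => ?_, fun x hx hbx => absurd hx.2 (not_le.2 hbx)⟩
    linarith [hslope x hx b hb hxb.le]
  obtain ⟨c, hc, hfc⟩ := intermediate_value_Icc hab hcont.continuousOn ⟨ha0.le, hb0.le⟩
  refine ⟨c, hc, fun x hx hxc => ?_, fun x hx hcx => ?_⟩
  · linarith [hslope x hx c hc hxc.le]
  · linarith [hslope c hc x hx hcx.le]

theorem vanDerCorput_second_deriv {φ φ' φ'' : ℝ → ℝ} {a b lam : ℝ}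
    (hφ : ∀ x, HasDerivAt φ (φ' x) x) (hφ' : ∀ x, HasDerivAt φ' (φ'' x) x)
    (hφ'' : Continuous φ'') (hab : a ≤ b) (hlam : 0 < lam)
    (hconv : ∀ x ∈ Icc a b, lam ≤ φ'' x) :
    ‖∫ x in a..b, cexp (φ x * I)‖ ≤ 8 / √lam := by
  obtain ⟨c, hc, hneg, hpos⟩ := exists_mem_Icc_of_le_deriv hφ' hab hconv
  have hmono : ∀ x ∈ Icc a b, 0 ≤ φ'' x := fun x hx => hlam.le.trans (hconv x hx)
  -- at distance `≥ δ = 1 / √lam` from `c` we have `|φ'| ≥ √lam`; the window of width `2δ`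
  -- around `c` is estimated trivially
  set δ := (√lam)⁻¹
  have hsqrt : 0 < √lam := sqrt_pos.2 hlam
  have hδ0 : 0 < δ := inv_pos.2 hsqrt
  have hδ : lam * δ = √lam := by rw [← div_eq_mul_inv, div_sqrt]
  set a' := max a (c - δ)
  set b' := min b (c + δ)
  have ha'b' : a' ≤ b' :=
    max_le (le_min hab (by linarith [hc.1])) (le_min (by linarith [hc.2]) (by linarith))
  have he : Continuous fun x => cexp (φ x * I) := by
    have := continuous_iff_continuousAt.2 fun x => (hφ x).continuousAt
    fun_prop
  have hleft : ‖∫ x in a..a', cexp (φ x * I)‖ ≤ 3 / √lam := by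
    rcases le_total (c - δ) a with h | h
    · rw [show a' = a from max_eq_left h, integral_same, norm_zero]
      positivity
    · rw [show a' = c - δ from max_eq_right h]
      have hsub : Icc a (c - δ) ⊆ Icc a b := Icc_subset_Icc le_rfl (by linarith [hc.2])
      refine vanDerCorput_first_deriv hφ hφ' hφ'' h hsqrt (fun x hx => hmono x (hsub hx))
        (Or.inr fun x hx => ?_)
      have := mul_le_mul_of_nonneg_left (show x - c ≤ -δ by linarith [hx.2]) hlam.le
      linarith [hneg x (hsub hx) (by linarith [hx.2])]
  have hright : ‖∫ x in b'..b, cexp (φ x * I)‖ ≤ 3 / √lam := by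
    rcases le_total b (c + δ) with h | h
    · rw [show b' = b from min_eq_left h, integral_same, norm_zero]
      positivity
    · rw [show b' = c + δ from min_eq_right h]
      have hsub : Icc (c + δ) b ⊆ Icc a b := Icc_subset_Icc (by linarith [hc.1]) le_rfl
      refine vanDerCorput_first_deriv hφ hφ' hφ'' h hsqrt (fun x hx => hmono x (hsub hx))
        (Or.inl fun x hx => ?_)
      have := mul_le_mul_of_nonneg_left (show δ ≤ x - c by linarith [hx.1]) hlam.le
      linarith [hpos x (hsub hx) (by linarith [hx.1])]
  have hmid : ‖∫ x in a'..b', cexp (φ x * I)‖ ≤ 2 / √lam := by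
    refine (norm_integral_cexp_le_sub ha'b').trans ?_
    rw [div_eq_mul_inv]
    linarith [le_max_right a (c - δ), min_le_right b (c + δ)]
  rw [← integral_add_adjacent_intervals (he.intervalIntegrable a b') (he.intervalIntegrable _ b),
    ← integral_add_adjacent_intervals (he.intervalIntegrable a a') (he.intervalIntegrable _ b')]
  calc _ ≤ _ := norm_add₃_le
    _ ≤ 3 / √lam + 2 / √lam + 3 / √lam := by gcongr
    _ = 8 / √lam := by ring

lemma inv_le_mul_rpow_neg_quarter {c p q : ℝ} (hc : 0 < c) (hp : 0 < p) (hq : 0 < q)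
    (h : q ≤ (c * p) ^ 4) : p⁻¹ ≤ c * q ^ (-(1 / 4) : ℝ) := by
  have hcp : (c * p)⁻¹ ≤ q ^ (-(1 / 4) : ℝ) := by
    rw [rpow_neg hq.le, inv_le_inv₀ (by positivity) (by positivity), one_div,
      rpow_inv_le_iff_of_pos hq.le (by positivity) (by norm_num)]
    exact_mod_cast h
  calc p⁻¹ = c * (c * p)⁻¹ := by field_simp
    _ ≤ c * q ^ (-(1 / 4) : ℝ) := by gcongr

lemma div_sqrt_le_rpow_neg_quarter {t r q : ℝ} (ht : 0 < t) (hr : 0 < r) (hq : 0 < q)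
    (h : q ≤ 4 * (t * r) ^ 2) : 8 / √(t * r / 2) ≤ 16 * q ^ (-(1 / 4) : ℝ) := by
  have hs : 0 < √(t * r / 2) := by positivity
  have := inv_le_mul_rpow_neg_quarter two_pos hs hq (h.trans_eq ?_)
  · rw [div_eq_mul_inv]; linarith
  rw [show (2 * √(t * r / 2)) ^ 4 = 16 * (√(t * r / 2) ^ 2) ^ 2 by ring, sq_sqrt (by positivity)]
  ring

lemma inv_le_two_mul_rpow_neg_quarter {t T D : ℝ} (ht : 1 ≤ t) (hT : 0 < T) (hTt : T ≤ t)
    (hD : 0 ≤ D) (hDt : D ≤ t) : t⁻¹ ≤ 2 * (t * (T + D)) ^ (-(1 / 4) : ℝ) := by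
  have ht0 : 0 < t := zero_lt_one.trans_le ht
  refine inv_le_mul_rpow_neg_quarter two_pos ht0 (by positivity) ?_
  calc t * (T + D) ≤ t * (2 * t) := by gcongr; linarith
    _ ≤ (2 * t) ^ 4 := by nlinarith [one_le_pow₀ (n := 2) ht]

noncomputable def besselPhase (μ t k : ℝ) : ℝ := -(μ * k + t * sin k)

lemma hasDerivAt_besselPhase (μ t k : ℝ) :
    HasDerivAt (besselPhase μ t) (-(μ + t * cos k)) k :=
  (((hasDerivAt_id k).const_mul μ).add ((hasDerivAt_sin k).const_mul t)).neg.congr_deriv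
    (by simp)

lemma hasDerivAt_neg_add_mul_cos (μ t k : ℝ) :
    HasDerivAt (fun k => -(μ + t * cos k)) (t * sin k) k :=
  (((hasDerivAt_cos k).const_mul t).const_add μ).neg.congr_deriv (by ring)

lemma continuous_besselPhase (μ t : ℝ) : Continuous (besselPhase μ t) := by
  unfold besselPhase; fun_prop

lemma besselJ_eq_integral_besselPhase (m : ℤ) (t : ℝ) :
    besselJ m t = (1 / (2 * π)) * ∫ k in (0)..(2 * π), cexp (besselPhase m t k * I) := by
  unfold besselJ besselPhase
  congr 1
  refine integral_congr fun k _ => congrArg cexp ?_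
  push_cast
  ring

lemma integral_besselPhase_pi_two_pi (m : ℤ) (t : ℝ) :
    ∫ k in π..(2 * π), cexp (besselPhase m t k * I) =
      conj (∫ k in (0)..π, cexp (besselPhase m t k * I)) := by
  have hconj :
      ∀ k, cexp (besselPhase m t (2 * π - k) * I) = conj (cexp (besselPhase m t k * I)) := by
    intro k
    have hphase : (besselPhase m t (2 * π - k) : ℂ) * I =
        besselPhase m t k * conj I + (-m : ℤ) * (2 * π * I) := by
      simp only [besselPhase, sin_two_pi_sub, conj_I]
      push_cast
      ring
    rw [hphase, Complex.exp_add, exp_int_mul_two_pi_mul_I, mul_one, ← exp_conj, map_mul,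
      conj_ofReal]
  rw [← intervalIntegral_conj]
  simp_rw [← hconj]
  rw [integral_comp_sub_left (fun k => cexp (besselPhase m t k * I)), sub_zero,
    show 2 * π - π = π by ring]

lemma norm_besselJ_le (m : ℤ) (t : ℝ) :
    ‖besselJ m t‖ ≤ ‖∫ k in (0)..π, cexp (besselPhase m t k * I)‖ := by
  have he : Continuous fun k => cexp (besselPhase m t k * I) := by
    have := continuous_besselPhase m t
    fun_prop
  set A := ∫ k in (0)..π, cexp (besselPhase m t k * I)
  rw [besselJ_eq_integral_besselPhase,
    ← integral_add_adjacent_intervals (he.intervalIntegrable 0 π) (he.intervalIntegrable π (2 * π)),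
    integral_besselPhase_pi_two_pi, norm_mul]
  calc _ ≤ ‖(1 / (2 * π) : ℂ)‖ * (‖A‖ + ‖A‖) := by
        gcongr
        exact (norm_add_le _ _).trans_eq (by rw [RCLike.norm_conj])
    _ = ‖A‖ / π := by
        rw [norm_div, norm_one, norm_mul, RCLike.norm_two, norm_real,
          Real.norm_of_nonneg pi_pos.le]
        field_simp
        ring
    _ ≤ ‖A‖ := div_le_self (norm_nonneg _) (by linarith [pi_gt_three])

lemma norm_integral_besselPhase_zero_halfPi_le {μ t : ℝ} (hμ : 0 < μ) (ht : 0 ≤ t) :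
    ‖∫ k in (0)..(π / 2), cexp (besselPhase μ t k * I)‖ ≤ 3 / μ := by
  refine vanDerCorput_first_deriv (hasDerivAt_besselPhase μ t) (hasDerivAt_neg_add_mul_cos μ t)
    (by fun_prop) (by positivity) hμ (fun x hx => ?_) (Or.inr fun x hx => ?_)
  · have := sin_nonneg_of_nonneg_of_le_pi hx.1 (by linarith [hx.2, pi_pos])
    positivity
  · have := cos_nonneg_of_mem_Icc ⟨by linarith [hx.1, pi_pos], hx.2⟩
    nlinarith

lemma norm_integral_besselPhase_halfPi_sub_le {μ t r : ℝ} (ht : 0 < t) (hr0 : 0 < r)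
    (hr : r ≤ π / 2) :
    ‖∫ k in (π / 2)..(π - r), cexp (besselPhase μ t k * I)‖ ≤ 8 / √(t * r / 2) := by
  refine vanDerCorput_second_deriv (hasDerivAt_besselPhase μ t) (hasDerivAt_neg_add_mul_cos μ t)
    (by fun_prop) (by linarith) (by positivity) fun x hx => ?_
  have hsin : 2 / π * r ≤ sin x := by
    rw [← sin_pi_sub]
    exact (mul_le_sin hr0.le hr).trans
      (sin_le_sin_of_le_of_le_pi_div_two (by linarith) (by linarith [hx.1]) (by linarith [hx.2]))
  have hpi : 1 / 2 ≤ 2 / π := by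
    rw [div_le_div_iff₀ two_pos pi_pos]; linarith [pi_le_four]
  calc t * r / 2 = t * (1 / 2 * r) := by ring
    _ ≤ t * sin x := by gcongr; exact (mul_le_mul_of_nonneg_right hpi hr0.le).trans hsin

lemma norm_integral_besselPhase_halfPi_pi_le {μ t : ℝ} (ht : 0 ≤ t) (htμ : t < μ) :
    ‖∫ k in (π / 2)..π, cexp (besselPhase μ t k * I)‖ ≤ 3 / (μ - t) := by
  refine vanDerCorput_first_deriv (hasDerivAt_besselPhase μ t) (hasDerivAt_neg_add_mul_cos μ t)
    (by fun_prop) (by linarith [pi_pos]) (by linarith) (fun x hx => ?_) (Or.inr fun x hx => ?_)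
  · have := sin_nonneg_of_nonneg_of_le_pi (by linarith [hx.1, pi_pos]) hx.2
    positivity
  · nlinarith [neg_one_le_cos x]

lemma norm_integral_besselPhase_sub_pi_le {μ t : ℝ} (hμ : 0 < μ) (hμt : μ < t) :
    ‖∫ k in (π - √((t - μ) / t))..π, cexp (besselPhase μ t k * I)‖ ≤ 6 / (t - μ) := by
  set r := √((t - μ) / t)
  have ht : 0 < t := hμ.trans hμt
  have hr : r ≤ 1 := sqrt_le_one.2 (by rw [div_le_one ht]; linarith)
  have hr2 : t * r ^ 2 = t - μ := by
    rw [sq_sqrt (by positivity)]; field_simp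
  rw [show 6 / (t - μ) = 3 / ((t - μ) / 2) by rw [div_div_eq_mul_div]; norm_num]
  refine vanDerCorput_first_deriv (hasDerivAt_besselPhase μ t) (hasDerivAt_neg_add_mul_cos μ t)
    (by fun_prop) (by linarith [sqrt_nonneg ((t - μ) / t)]) (by linarith) (fun x hx => ?_)
    (Or.inl fun x hx => ?_)
  · have := sin_nonneg_of_nonneg_of_le_pi (by linarith [hx.1, pi_gt_three]) hx.2
    positivity
  · have hcos : cos x ≤ -(1 - r ^ 2 / 2) := by
      refine (cos_le_cos_of_nonneg_of_le_pi (by linarith [pi_gt_three]) hx.2 hx.1).trans ?_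
      rw [cos_pi_sub]
      exact neg_le_neg one_sub_sq_div_two_le_cos
    -- `t r ^ 2 = t - μ` turns this into `μ + t cos x ≤ -(t - μ) / 2`
    nlinarith

lemma norm_integral_besselPhase_le {μ t r : ℝ} (hμ : 0 < μ) (ht : 0 < t) (hr0 : 0 < r)
    (hr : r ≤ π / 2) :
    ‖∫ k in (0)..π, cexp (besselPhase μ t k * I)‖ ≤
      3 / μ + 8 / √(t * r / 2) + ‖∫ k in (π - r)..π, cexp (besselPhase μ t k * I)‖ := by
  have he : Continuous fun k => cexp (besselPhase μ t k * I) := by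
    have := continuous_besselPhase μ t
    fun_prop
  rw [← integral_add_adjacent_intervals (he.intervalIntegrable 0 (π - r))
      (he.intervalIntegrable _ π),
    ← integral_add_adjacent_intervals (he.intervalIntegrable 0 (π / 2))
      (he.intervalIntegrable _ (π - r))]
  refine norm_add₃_le.trans ?_
  gcongr
  · exact norm_integral_besselPhase_zero_halfPi_le hμ ht.le
  · exact norm_integral_besselPhase_halfPi_sub_le ht hr0 hr

lemma exists_cutoff_besselPhase_of_abs_le {μ t T : ℝ} (hT : 1 ≤ T) (hTt : T ^ 3 = t)
    (hDT : |μ - t| ≤ T) :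
    ∃ r, 0 < r ∧ r ≤ π / 2 ∧
      8 / √(t * r / 2) + ‖∫ k in (π - r)..π, cexp (besselPhase μ t k * I)‖ ≤
        28 * (t * (T + |μ - t|)) ^ (-(1 / 4) : ℝ) := by
  set D := |μ - t|
  set q := t * (T + D)
  have hT0 : 0 < T := zero_lt_one.trans_le hT
  have ht : 0 < t := by rw [← hTt]; positivity
  have hq : 0 < q := by positivity
  have hqT : q = T ^ 3 * (T + D) := by rw [hTt]
  refine ⟨T⁻¹, by positivity, (inv_le_one_of_one_le₀ hT).trans (by linarith [pi_gt_three]), ?_⟩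
  have htail := (norm_integral_cexp_le_sub (φ := besselPhase μ t)
    (by linarith [inv_pos.2 hT0] : π - T⁻¹ ≤ π)).trans_eq (sub_sub_cancel _ _)
  have hT' := inv_le_mul_rpow_neg_quarter two_pos hT0 hq (by rw [hqT]; nlinarith)
  have := div_sqrt_le_rpow_neg_quarter ht (inv_pos.2 hT0) hq (by
    rw [hqT, ← hTt, show T ^ 3 * T⁻¹ = T ^ 2 by field_simp]
    nlinarith)
  have : 0 ≤ q ^ (-(1 / 4) : ℝ) := by positivity
  linarith

lemma exists_cutoff_besselPhase_of_lt_abs {μ t T : ℝ} (hT : 1 ≤ T) (hTt : T ^ 3 = t)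
    (hμ : 0 < μ) (hμt : |μ - t| < t) (hTD : T < |μ - t|) :
    ∃ r, 0 < r ∧ r ≤ π / 2 ∧
      8 / √(t * r / 2) + ‖∫ k in (π - r)..π, cexp (besselPhase μ t k * I)‖ ≤
        28 * (t * (T + |μ - t|)) ^ (-(1 / 4) : ℝ) := by
  set D := |μ - t|
  set q := t * (T + D)
  have ht : 0 < t := by rw [← hTt]; positivity
  have hq : 0 < q := by positivity
  have hD : 0 < D := (zero_lt_one.trans_le hT).trans hTD
  have hD' := inv_le_mul_rpow_neg_quarter two_pos hD hq (by
    have := pow_le_pow_left₀ (by linarith) hTD.le 3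
    rw [show q = T ^ 3 * (T + D) by rw [hTt]]; nlinarith)
  rcases lt_or_gt_of_ne (show μ ≠ t from fun h => by simp [D, h] at hD) with hlt | hgt
  · have hDt : D = t - μ := by
      show |μ - t| = t - μ
      rw [abs_sub_comm, abs_of_pos (sub_pos.2 hlt)]
    set r := √((t - μ) / t)
    have hr2 : (t * r) ^ 2 = t * D := by
      rw [mul_pow, sq_sqrt (div_nonneg (sub_nonneg.2 hlt.le) ht.le), hDt]; field_simp
    have hr1 : r ≤ 1 := sqrt_le_one.2 ((div_le_one ht).2 (by linarith))
    have hr0 : 0 < r := sqrt_pos.2 (div_pos (sub_pos.2 hlt) ht)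
    refine ⟨r, hr0, hr1.trans (by linarith [pi_gt_three]), ?_⟩
    have := div_sqrt_le_rpow_neg_quarter ht hr0 hq (by rw [hr2]; nlinarith)
    have : ‖∫ k in (π - r)..π, cexp (besselPhase μ t k * I)‖ ≤ 6 * D⁻¹ := by
      rw [hDt, ← div_eq_mul_inv]; exact norm_integral_besselPhase_sub_pi_le hμ hlt
    linarith
  · have hDt : D = μ - t := abs_of_pos (sub_pos.2 hgt)
    refine ⟨π / 2, by positivity, le_rfl, ?_⟩
    have hTle : T ≤ t := hTt ▸ le_self_pow₀ hT (by norm_num)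
    have hq2 : q ≤ 2 * t ^ 2 := by simp only [q]; nlinarith
    have hπ : 9 ≤ π ^ 2 := by nlinarith [pi_gt_three]
    have := div_sqrt_le_rpow_neg_quarter ht (by positivity : 0 < π / 2) hq
      (by nlinarith [mul_le_mul_of_nonneg_right hπ (sq_nonneg t)])
    have : ‖∫ k in (π / 2)..π, cexp (besselPhase μ t k * I)‖ ≤ 3 * D⁻¹ := by
      rw [hDt, ← div_eq_mul_inv]; exact norm_integral_besselPhase_halfPi_pi_le ht.le hgt
    have : 0 ≤ q ^ (-(1 / 4) : ℝ) := by positivity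
    rw [sub_half]
    linarith

theorem statement1_general (ε : ℝ) (hε1 : ε < 1) :
    ∃ C : ℝ, 0 < C ∧ ∀ (m : ℤ) (t : ℝ), 1 ≤ t → |(m : ℝ) - t| < ε * t →
      ‖besselJ m t‖ ≤ C * t ^ (-(1/4) : ℝ) *
        (t ^ ((1/3) : ℝ) + |(m : ℝ) - t|) ^ (-(1/4) : ℝ) := by
  have hε : 0 < 1 - ε := sub_pos.2 hε1
  refine ⟨6 / (1 - ε) + 28, by positivity, fun m t ht hmt => ?_⟩
  have ht0 : 0 < t := zero_lt_one.trans_le ht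
  set T := t ^ ((1/3) : ℝ)
  have hT : 1 ≤ T := one_le_rpow ht (by norm_num)
  have hTt : T ^ 3 = t := by rw [← rpow_natCast, ← rpow_mul ht0.le]; norm_num
  have hm : (1 - ε) * t < m := by linarith [(abs_lt.1 hmt).1]
  have hm0 : 0 < (m : ℝ) := (mul_pos hε ht0).trans hm
  have hmt_lt : |(m : ℝ) - t| < t := hmt.trans (by nlinarith)
  obtain ⟨r, hr0, hr, hbound⟩ := (le_or_gt |(m : ℝ) - t| T).elim
    (exists_cutoff_besselPhase_of_abs_le hT hTt)
    (exists_cutoff_besselPhase_of_lt_abs hT hTt hm0 hmt_lt)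
  set Q := (t * (T + |(m : ℝ) - t|)) ^ (-(1 / 4) : ℝ)
  have hm3 : 3 / (m : ℝ) ≤ 6 / (1 - ε) * Q :=
    calc 3 / (m : ℝ) ≤ 3 / ((1 - ε) * t) := by gcongr
      _ = 3 / (1 - ε) * t⁻¹ := by field_simp
      _ ≤ 3 / (1 - ε) * (2 * Q) := by
        gcongr
        exact inv_le_two_mul_rpow_neg_quarter ht (zero_lt_one.trans_le hT)
          (hTt ▸ le_self_pow₀ hT (by norm_num)) (abs_nonneg _) hmt_lt.le
      _ = 6 / (1 - ε) * Q := by ring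
  calc ‖besselJ m t‖ ≤ ‖∫ k in (0)..π, cexp (besselPhase m t k * I)‖ := norm_besselJ_le m t
    _ ≤ 3 / m + 8 / √(t * r / 2) + ‖∫ k in (π - r)..π, cexp (besselPhase m t k * I)‖ :=
      norm_integral_besselPhase_le hm0 ht0 hr0 hr
    _ ≤ (6 / (1 - ε) + 28) * Q := by linarith
    _ = _ := by rw [mul_assoc, ← mul_rpow ht0.le (by positivity)]

/-- For every `ε ∈ (0,1)` there is `C > 0` such that for every integer `m`
and real `t ≥ 1` with `|m - t| < ε t`, one has
`|J_m(t)| ≤ C t^{-1/4} (t^{1/3} + |m - t|)^{-1/4}`. -/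
theorem statement1 (ε : ℝ) (hε0 : 0 < ε) (hε1 : ε < 1) :
    ∃ C : ℝ, 0 < C ∧ ∀ (m : ℤ) (t : ℝ), 1 ≤ t → |(m : ℝ) - t| < ε * t →
      ‖besselJ m t‖ ≤ C * t ^ (-(1/4) : ℝ) *
        (t ^ ((1/3) : ℝ) + |(m : ℝ) - t|) ^ (-(1/4) : ℝ) :=
  statement1_general ε hε1
end

section
/- Let d ≥ 1 be an integer. For every t ∈ ℝ and all n, n' ∈ ℤᵈ, the operator exponential exp(itΔ) on ℓ²(ℤᵈ) satisfies (exp(itΔ)δ_{n'})(n) = ∏_{j=1}^d i^{−m_j} · J_{m_j}(t), where m = n − n' ∈ ℤᵈ and i^{−m_j} denotes the integer power of the imaginary unit. -/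
/-!
Fourier series on the torus `(ℝ / 2πℤ)ᵈ` diagonalise `Δ`: multiplying a function by
`∑ⱼ cos xⱼ` acts on its Fourier coefficients exactly as `Δ` acts on `ℓ²(ℤᵈ)`, so
`(Δᵏ δ_{n'})(n)` is the `(n - n')`-th Fourier coefficient of `(∑ⱼ cos xⱼ)ᵏ`. Summing the
exponential series under the integral (dominated by `(|t| d)ᵏ / k!`), `(exp(itΔ) δ_{n'})(n)` is the
coefficient of `exp(it ∑ⱼ cos xⱼ) = ∏ⱼ exp(it cos xⱼ)`, which factorises over the coordinates.
In each coordinate the quarter-period shift `x ↦ x - π/2`, under which `sin` becomes `-cos`,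
matches the one-dimensional coefficient with Bessel's integral up to the factor `i^{-m}`.
-/

open MeasureTheory

def IsDiscreteLaplacian (d : ℕ)
    (L : lp (fun _ : Fin d → ℤ => ℂ) 2 →L[ℂ] lp (fun _ : Fin d → ℤ => ℂ) 2) : Prop :=
  ∀ (f : lp (fun _ : Fin d → ℤ => ℂ) 2) (n : Fin d → ℤ),
    L f n = (1 / 2) * ∑ j : Fin d, (f (n + Pi.single j 1) + f (n - Pi.single j 1))

open Complex Finset
open scoped Real Nat

lemma integral_exp_neg_int_mul (m : ℤ) :
    ∫ y in (0:ℝ)..2 * π, exp (-I * m * y) = if m = 0 then (2 * π : ℂ) else 0 := by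
  split_ifs with hm
  · simp [hm]
  · have hc : -I * m ≠ 0 := by simp [hm, I_ne_zero]
    rw [integral_exp_mul_complex hc, ofReal_zero, mul_zero, exp_zero,
      show -I * m * ((2 * π : ℝ) : ℂ) = ((-m : ℤ) : ℂ) * (2 * π * I) by push_cast; ring,
      exp_int_mul_two_pi_mul_I, sub_self, zero_div]

lemma I_zpow_eq_exp (m : ℤ) : I ^ m = exp (I * m * (π / 2)) := by
  conv_lhs => rw [← exp_pi_div_two_mul_I, ← exp_int_mul]
  ring_nf

lemma integral_exp_cos_mul_exp_neg_int_mul (m : ℤ) (t : ℝ) :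
    ∫ y in (0:ℝ)..2 * π, exp (I * t * Real.cos y) * exp (-I * m * y)
      = 2 * π * (I ^ (-m) * besselJ m t) := by
  set g : ℝ → ℂ := fun y => exp (-I * m * y - I * t * Real.sin y)
  have hg : Function.Periodic g (2 * π) := fun y => by
    simp only [g, Real.sin_add_two_pi]
    rw [show -I * m * ((y + 2 * π : ℝ) : ℂ) - I * t * Real.sin y
        = (-I * m * y - I * t * Real.sin y) + ((-m : ℤ) : ℂ) * (2 * π * I) by push_cast; ring,
      exp_add, exp_int_mul_two_pi_mul_I, mul_one]
  have hshift (y : ℝ) :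
      exp (I * t * Real.cos y) * exp (-I * m * y) = I ^ (-m) * g (y - π / 2) := by
    simp only [g, Real.sin_sub_pi_div_two, zpow_neg, I_zpow_eq_exp, ← exp_neg, ← exp_add]
    congr 1
    push_cast
    ring
  simp_rw [hshift]
  rw [intervalIntegral.integral_const_mul, intervalIntegral.integral_comp_sub_right,
    show (2 * π - π / 2 : ℝ) = 0 - π / 2 + 2 * π by ring,
    hg.intervalIntegral_add_eq (0 - π / 2) 0, zero_add]
  change _ = 2 * π * (I ^ (-m) * ((1 / (2 * π)) * ∫ y in (0:ℝ)..2 * π, g y))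
  field_simp

noncomputable section

variable {d : ℕ}

def torusMeasure (d : ℕ) : Measure (Fin d → ℝ) :=
  Measure.pi fun _ => volume.restrict (Set.Ioc 0 (2 * π))

instance : IsFiniteMeasure (torusMeasure d) := by
  unfold torusMeasure; infer_instance

def torusChar (m : Fin d → ℤ) (x : Fin d → ℝ) : ℂ :=
  ∏ j, exp (-I * m j * x j)

def torusCoeff (f : (Fin d → ℝ) → ℂ) (m : Fin d → ℤ) : ℂ :=
  (2 * π : ℂ)⁻¹ ^ d * ∫ x, f x * torusChar m x ∂torusMeasure d

def cosSum (x : Fin d → ℝ) : ℂ :=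
  ∑ j, (Real.cos (x j) : ℂ)

lemma norm_torusChar (m : Fin d → ℤ) (x : Fin d → ℝ) : ‖torusChar m x‖ = 1 := by
  simp only [torusChar, norm_prod, norm_exp]
  refine prod_eq_one fun j _ => ?_
  simp

lemma continuous_torusChar (m : Fin d → ℤ) : Continuous (torusChar m) := by
  unfold torusChar; fun_prop

lemma continuous_cosSum : Continuous (cosSum (d := d)) := by
  unfold cosSum; fun_prop

lemma norm_cosSum_le (x : Fin d → ℝ) : ‖cosSum x‖ ≤ d :=
  calc ‖cosSum x‖ ≤ ∑ j, ‖(Real.cos (x j) : ℂ)‖ := norm_sum_le _ _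
    _ ≤ ∑ _j : Fin d, (1 : ℝ) := by
      gcongr with j; rw [norm_real, Real.norm_eq_abs]; exact Real.abs_cos_le_one _
    _ = d := by simp

lemma torusChar_add_single (m : Fin d → ℤ) (j : Fin d) (r : ℤ) (x : Fin d → ℝ) :
    torusChar (m + Pi.single j r) x = exp (-I * r * x j) * torusChar m x := by
  have h : ∀ i, exp (-I * ((m + Pi.single j r : Fin d → ℤ) i : ℤ) * x i)
      = exp (-I * ((Pi.single j r : Fin d → ℤ) i : ℤ) * x i) * exp (-I * m i * x i) :=
    fun i => by rw [← exp_add, Pi.add_apply]; push_cast; ring_nf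
  simp only [torusChar, h, prod_mul_distrib]
  rw [Fintype.prod_eq_single j fun i hi => by simp [Pi.single_eq_of_ne hi], Pi.single_eq_same]

lemma cosSum_mul_torusChar (m : Fin d → ℤ) (x : Fin d → ℝ) :
    cosSum x * torusChar m x
      = 1 / 2 * ∑ j, (torusChar (m + Pi.single j 1) x + torusChar (m - Pi.single j 1) x) := by
  simp only [sub_eq_add_neg, ← Pi.single_neg, torusChar_add_single, cosSum, mul_sum, sum_mul,
    ← add_mul, Complex.ofReal_cos, Complex.cos]
  refine sum_congr rfl fun j _ => ?_
  push_cast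
  ring_nf

lemma integrable_mul_torusChar {f : (Fin d → ℝ) → ℂ} (hf : Integrable f (torusMeasure d))
    (m : Fin d → ℤ) : Integrable (fun x => f x * torusChar m x) (torusMeasure d) :=
  hf.mul_bdd (continuous_torusChar m).aestronglyMeasurable
    (.of_forall fun x => (norm_torusChar m x).le)

lemma torusCoeff_const_mul (c : ℂ) (f : (Fin d → ℝ) → ℂ) (m : Fin d → ℤ) :
    torusCoeff (fun x => c * f x) m = c * torusCoeff f m := by
  simp only [torusCoeff, mul_assoc, integral_const_mul]
  ring

lemma torusCoeff_cosSum_mul {f : (Fin d → ℝ) → ℂ} (hf : Integrable f (torusMeasure d))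
    (m : Fin d → ℤ) :
    torusCoeff (fun x => cosSum x * f x) m
      = 1 / 2 * ∑ j, (torusCoeff f (m + Pi.single j 1) + torusCoeff f (m - Pi.single j 1)) := by
  have hint m' := (integrable_mul_torusChar hf m').const_mul (1 / 2 : ℂ)
  have h : ∀ x, cosSum x * f x * torusChar m x = ∑ j,
      (1 / 2 * (f x * torusChar (m + Pi.single j 1) x)
        + 1 / 2 * (f x * torusChar (m - Pi.single j 1) x)) := fun x => by
    rw [mul_right_comm, mul_comm, cosSum_mul_torusChar, mul_left_comm]
    simp only [mul_sum, mul_add]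
  simp only [torusCoeff, h]
  rw [integral_finsetSum, mul_sum, mul_sum]
  · refine sum_congr rfl fun j _ => ?_
    rw [integral_add (hint _) (hint _), integral_const_mul, integral_const_mul]
    ring
  · exact fun j _ => (hint _).add (hint _)

lemma integral_torusMeasure_prod (g : Fin d → ℝ → ℂ) :
    ∫ x, ∏ j, g j (x j) ∂torusMeasure d = ∏ j, ∫ y in (0:ℝ)..2 * π, g j y := by
  simp only [torusMeasure, integral_fintype_prod_eq_prod,
    intervalIntegral.integral_of_le Real.two_pi_pos.le]

lemma torusCoeff_prod (g : Fin d → ℝ → ℂ) (m : Fin d → ℤ) :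
    torusCoeff (fun x => ∏ j, g j (x j)) m
      = ∏ j, (2 * π : ℂ)⁻¹ * ∫ y in (0:ℝ)..2 * π, g j y * exp (-I * m j * y) := by
  simp only [torusCoeff, torusChar, ← prod_mul_distrib]
  rw [integral_torusMeasure_prod (fun j y => g j y * exp (-I * m j * y)), prod_mul_distrib,
    prod_const, card_univ, Fintype.card_fin]

lemma torusCoeff_one (m : Fin d → ℤ) : torusCoeff (fun _ => 1) m = if m = 0 then 1 else 0 := by
  have h := torusCoeff_prod (fun _ _ => 1) m
  simp only [prod_const_one, one_mul] at h
  have h2π : (2 * π : ℂ) ≠ 0 := by simp [Real.pi_ne_zero]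
  simp only [h, integral_exp_neg_int_mul, mul_ite, mul_zero, inv_mul_cancel₀ h2π, prod_boole,
    mem_univ, true_implies, funext_iff, Pi.zero_apply]

lemma torusCoeff_exp_mul_cosSum (t : ℝ) (m : Fin d → ℤ) :
    torusCoeff (fun x => exp (I * t * cosSum x)) m = ∏ j, I ^ (-m j) * besselJ (m j) t := by
  have h2π : (2 * π : ℂ) ≠ 0 := by simp [Real.pi_ne_zero]
  simp only [cosSum, mul_sum, exp_sum]
  rw [torusCoeff_prod (fun j y => exp (I * t * Real.cos y)) m]
  refine prod_congr rfl fun j _ => ?_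
  rw [integral_exp_cos_mul_exp_neg_int_mul, ← mul_assoc, inv_mul_cancel₀ h2π, one_mul]

lemma hasSum_torusCoeff_exp {f : (Fin d → ℝ) → ℂ}
    (hf : AEStronglyMeasurable f (torusMeasure d)) {C : ℝ} (hC : ∀ x, ‖f x‖ ≤ C) (m : Fin d → ℤ) :
    HasSum (fun k : ℕ => (k ! : ℂ)⁻¹ * torusCoeff (fun x => f x ^ k) m)
      (torusCoeff (fun x => exp (f x)) m) := by
  have hchar := (continuous_torusChar m).aestronglyMeasurable (μ := torusMeasure d)
  have hint :
      HasSum (fun k : ℕ => ∫ x, (k ! : ℂ)⁻¹ * (f x ^ k * torusChar m x) ∂torusMeasure d)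
        (∫ x, exp (f x) * torusChar m x ∂torusMeasure d) := by
    refine hasSum_integral_of_dominated_convergence (fun k _ => C ^ k / k !)
      (fun k => ((hf.pow k).mul hchar).const_mul _) (fun k => .of_forall fun x => ?_)
      (.of_forall fun _ => Real.summable_pow_div_factorial C) (integrable_const _)
      (.of_forall fun x => ?_)
    · rw [norm_mul, norm_mul, norm_torusChar, mul_one, norm_pow, norm_inv, norm_natCast,
        inv_mul_eq_div]
      gcongr
      exact hC x
    · simpa only [exp_eq_exp_ℂ, smul_eq_mul, mul_assoc]
        using (NormedSpace.exp_series_hasSum_exp' (𝕂 := ℂ) (f x)).mul_right (torusChar m x)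
  exact (hint.mul_left ((2 * π : ℂ)⁻¹ ^ d)).congr_fun fun k => by
    rw [torusCoeff, integral_const_mul, mul_left_comm]

lemma IsDiscreteLaplacian.pow_single_apply
    {L : lp (fun _ : Fin d → ℤ => ℂ) 2 →L[ℂ] lp (fun _ : Fin d → ℤ => ℂ) 2}
    (hL : IsDiscreteLaplacian d L) (n' : Fin d → ℤ) (k : ℕ) (n : Fin d → ℤ) :
    (L ^ k) (lp.single 2 n' 1) n = torusCoeff (fun x => cosSum x ^ k) (n - n') := by
  induction k generalizing n with
  | zero => simp [torusCoeff_one, sub_eq_zero, Pi.single_apply]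
  | succ k ih =>
    have hint : Integrable (fun x => cosSum x ^ k) (torusMeasure d) :=
      .of_bound (continuous_cosSum.pow k).aestronglyMeasurable (d ^ k)
        (.of_forall fun x => by rw [norm_pow]; gcongr; exact norm_cosSum_le x)
    simp only [pow_succ', mul_apply_eq_comp, hL _ n, ih, torusCoeff_cosSum_mul hint,
      add_sub_right_comm, sub_right_comm]

lemma hasSum_exp_apply {ι : Type*} {p : ENNReal} [Fact (1 ≤ p)]
    (A : lp (fun _ : ι => ℂ) p →L[ℂ] lp (fun _ : ι => ℂ) p) (v : lp (fun _ : ι => ℂ) p)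
    (i : ι) :
    HasSum (fun k : ℕ => (k ! : ℂ)⁻¹ * (A ^ k) v i) (NormedSpace.exp A v i) := by
  exact (NormedSpace.exp_series_hasSum_exp' (𝕂 := ℂ) A).mapL
    ((lp.evalCLM ℂ _ p i).comp (ContinuousLinearMap.apply ℂ _ v))

end

theorem statement5_general (d : ℕ)
    (L : lp (fun _ : Fin d → ℤ => ℂ) 2 →L[ℂ] lp (fun _ : Fin d → ℤ => ℂ) 2)
    (hL : IsDiscreteLaplacian d L) (t : ℝ) (n n' : Fin d → ℤ) :
    (NormedSpace.exp ((Complex.I * t) • L)) (lp.single 2 n' (1:ℂ)) n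
      = ∏ j : Fin d, Complex.I ^ (-(n j - n' j)) * besselJ (n j - n' j) t := by
  have hbound (x : Fin d → ℝ) : ‖I * t * cosSum x‖ ≤ |t| * d := by
    rw [norm_mul, norm_mul, norm_I, one_mul, norm_real, Real.norm_eq_abs]
    exact mul_le_mul_of_nonneg_left (norm_cosSum_le x) (abs_nonneg t)
  have hcoeff := hasSum_torusCoeff_exp (f := fun x => I * t * cosSum x)
    (continuous_const.mul continuous_cosSum).aestronglyMeasurable hbound (n - n')
  rw [torusCoeff_exp_mul_cosSum] at hcoeff
  refine (hasSum_exp_apply _ _ n).unique (hcoeff.congr_fun fun k => ?_)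
  rw [smul_pow, smul_apply, lp.coeFn_smul, Pi.smul_apply, smul_eq_mul, hL.pow_single_apply,
    ← torusCoeff_const_mul]
  simp only [mul_pow]

/-- For `d ≥ 1`, all `t ∈ ℝ` and all `n, n' ∈ ℤᵈ`,
`(exp(itΔ)δ_{n'})(n) = ∏_{j=1}^d i^{-m_j} J_{m_j}(t)` where `m = n - n'`. -/
theorem statement5 (d : ℕ) (hd : 1 ≤ d)
    (L : lp (fun _ : Fin d → ℤ => ℂ) 2 →L[ℂ] lp (fun _ : Fin d → ℤ => ℂ) 2)
    (hL : IsDiscreteLaplacian d L) (t : ℝ) (n n' : Fin d → ℤ) :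
    (NormedSpace.exp ((Complex.I * t) • L)) (lp.single 2 n' (1:ℂ)) n
      = ∏ j : Fin d, Complex.I ^ (-(n j - n' j)) * besselJ (n j - n' j) t :=
  statement5_general d L hL t n n'
end

section
/- Let (z_j)_{j=1}^∞ be a sequence in 𝔻∖{0} with r₀ := inf_j |z_j| > 0 and Z := ∑_{j=1}^∞ (1 − |z_j|) < ∞. For each integer n ≥ 1 the sum B_n = (1/n)∑_{j=1}^∞ (z_j^{−n} − (conj z_j)ⁿ) converges absolutely and satisfies |B_n| ≤ (2/r₀ⁿ)·Z. Moreover the Blaschke product B(z) = ∏_{j=1}^∞ (|z_j|/z_j)·(z_j − z)/(1 − (conj z_j)·z) converges for every z ∈ 𝔻, and for every z with |z| < r₀ one has B(z) = (∏_{j=1}^∞ |z_j|) · exp(−∑_{n=1}^∞ B_n zⁿ), the latter series converging absolutely for |z| < r₀. -/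
/-- The coefficient `B_n = (1/n)∑_{j=1}^∞ (z_j^{-n} - (conj z_j)ⁿ)`. -/
noncomputable def blaschkeCoef (z : ℕ → ℂ) (n : ℕ) : ℂ :=
  (1 / (n : ℂ)) * ∑' j : ℕ, ((z j) ^ (-(n : ℤ)) - (starRingEnd ℂ) (z j) ^ n)

/-- The `j`-th factor `(|z_j|/z_j)·(z_j - w)/(1 - conj(z_j)·w)` of the Blaschke product. -/
noncomputable def blaschkeTerm (z : ℕ → ℂ) (w : ℂ) (j : ℕ) : ℂ :=
  ((‖z j‖ : ℂ) / z j) * ((z j - w) / (1 - (starRingEnd ℂ) (z j) * w))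

open Complex ComplexConjugate

/-!
For `0 < r ≤ |a| ≤ 1` one has `a⁻ⁿ - conj aⁿ = a⁻ⁿ (1 - |a|²ⁿ)`, and Bernoulli's inequality gives
`1 - |a|²ⁿ ≤ 2n (1 - |a|)`. So every quantity attached to a zero `a` is `O(1 - |a|)` with a
constant depending only on `r`, `n` and `w`, and summing against `∑ (1 - |z_j|) < ∞` gives the
bound on `B_n` and, through `|b_a(w) - 1| ≤ 2 (1 - |a|) / (r (1 - |w|))`, the convergence of the
product. For `|w| < r ≤ |a|` both `w / a` and `conj a · w` lie in the disc, so
`b_a(w) = |a| (1 - w/a) / (1 - conj a · w)` is `|a| exp (-∑ₙ (a⁻ⁿ - conj aⁿ) wⁿ / n)`. The double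
series over `(j, n)` is dominated by `2 (1 - |z_j|) (|w| / r)ⁿ`, so it may be summed in either
order, and the product of the exponentials becomes `exp (-∑ₙ Bₙ wⁿ)`.
-/

lemma one_sub_pow_le_mul_one_sub {t : ℝ} (ht : -1 ≤ t) (n : ℕ) : 1 - t ^ n ≤ n * (1 - t) := by
  have := one_add_mul_le_pow (a := t - 1) (by linarith) n
  rw [add_sub_cancel] at this
  linarith

lemma zpow_neg_sub_conj_pow {a : ℂ} (ha : a ≠ 0) (n : ℕ) :
    a ^ (-(n : ℤ)) - conj a ^ n = (a ^ n)⁻¹ * ((1 - (‖a‖ ^ 2) ^ n : ℝ) : ℂ) := by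
  push_cast
  rw [zpow_neg, zpow_natCast, ← mul_conj', mul_pow]
  field_simp

lemma norm_zpow_neg_sub_conj_pow_le {a : ℂ} {r : ℝ} (hr : 0 < r) (hra : r ≤ ‖a‖) (ha : ‖a‖ ≤ 1)
    (n : ℕ) : ‖a ^ (-(n : ℤ)) - conj a ^ n‖ ≤ 2 * n / r ^ n * (1 - ‖a‖) := by
  have ha0 : 0 < ‖a‖ := hr.trans_le hra
  have hpow : (‖a‖ ^ 2) ^ n ≤ 1 := pow_le_one₀ (by positivity) (by nlinarith)
  rw [zpow_neg_sub_conj_pow (norm_pos_iff.1 ha0), norm_mul, norm_inv, norm_pow, norm_real,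
    Real.norm_of_nonneg (by linarith)]
  calc (‖a‖ ^ n)⁻¹ * (1 - (‖a‖ ^ 2) ^ n)
      ≤ (r ^ n)⁻¹ * (n * (1 - ‖a‖ ^ 2)) := by
        gcongr
        exact one_sub_pow_le_mul_one_sub (by nlinarith) n
    _ = (r ^ n)⁻¹ * (n * (1 + ‖a‖)) * (1 - ‖a‖) := by ring
    _ ≤ (r ^ n)⁻¹ * (n * 2) * (1 - ‖a‖) := by gcongr; linarith
    _ = 2 * n / r ^ n * (1 - ‖a‖) := by ring

lemma one_sub_norm_le_norm_one_sub_conj_mul {a w : ℂ} (ha : ‖a‖ ≤ 1) :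
    1 - ‖w‖ ≤ ‖1 - conj a * w‖ := by
  calc 1 - ‖w‖ ≤ ‖(1 : ℂ)‖ - ‖conj a * w‖ := by
        rw [norm_one, norm_mul, RCLike.norm_conj]
        nlinarith [norm_nonneg a, norm_nonneg w]
    _ ≤ ‖1 - conj a * w‖ := norm_sub_norm_le _ _

lemma one_sub_conj_mul_ne_zero {a w : ℂ} (ha : ‖a‖ ≤ 1) (hw : ‖w‖ < 1) : 1 - conj a * w ≠ 0 :=
  norm_pos_iff.1 <| (sub_pos.2 hw).trans_le (one_sub_norm_le_norm_one_sub_conj_mul ha)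

lemma blaschkeFactor_sub_one {a w : ℂ} (ha0 : a ≠ 0) (hd : 1 - conj a * w ≠ 0) :
    ‖a‖ / a * ((a - w) / (1 - conj a * w)) - 1
      = (‖a‖ - 1) * (a + ‖a‖ * w) / (a * (1 - conj a * w)) := by
  rw [div_mul_div_comm, div_sub_one (mul_ne_zero ha0 hd)]
  congr 1
  linear_combination w * mul_conj' a

lemma norm_blaschkeFactor_sub_one_le {a w : ℂ} {r : ℝ} (hr : 0 < r) (hra : r ≤ ‖a‖)
    (ha : ‖a‖ ≤ 1) (hw : ‖w‖ < 1) :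
    ‖‖a‖ / a * ((a - w) / (1 - conj a * w)) - 1‖ ≤ 2 / (r * (1 - ‖w‖)) * (1 - ‖a‖) := by
  have ha0 : 0 < ‖a‖ := hr.trans_le hra
  have hd := one_sub_conj_mul_ne_zero ha hw
  have hnum : ‖a + ‖a‖ * w‖ ≤ 2 := by
    calc ‖a + ‖a‖ * w‖ ≤ ‖a‖ + ‖a‖ * ‖w‖ := by
          simpa [norm_mul] using norm_add_le a (‖a‖ * w)
      _ ≤ 2 := by nlinarith [norm_nonneg w]
  have hden : r * (1 - ‖w‖) ≤ ‖a‖ * ‖1 - conj a * w‖ :=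
    mul_le_mul hra (one_sub_norm_le_norm_one_sub_conj_mul ha) (by linarith) ha0.le
  rw [blaschkeFactor_sub_one (norm_pos_iff.1 ha0) hd, norm_div, norm_mul, norm_mul,
    ← ofReal_one, ← ofReal_sub, norm_real, Real.norm_of_nonpos (by linarith), neg_sub,
    div_le_iff₀ (by positivity)]
  calc (1 - ‖a‖) * ‖a + ‖a‖ * w‖ ≤ (1 - ‖a‖) * 2 := by gcongr
    _ = 2 / (r * (1 - ‖w‖)) * (1 - ‖a‖) * (r * (1 - ‖w‖)) := by
        field_simp [hr.ne', (by linarith : 1 - ‖w‖ ≠ 0)]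
    _ ≤ 2 / (r * (1 - ‖w‖)) * (1 - ‖a‖) * (‖a‖ * ‖1 - conj a * w‖) := by
        gcongr

/-- The `n + 1`-st Taylor coefficient, in `w`, of `-log ((a - w) / (a * (1 - conj a * w)))`. -/
noncomputable def blaschkeLogTerm (a w : ℂ) (n : ℕ) : ℂ :=
  (a ^ (-((n + 1 : ℕ) : ℤ)) - conj a ^ (n + 1)) * w ^ (n + 1) / (n + 1)

lemma hasSum_blaschkeLogTerm {a w : ℂ} (ha : ‖a‖ ≤ 1) (hw : ‖w‖ < ‖a‖) :
    HasSum (blaschkeLogTerm a w) (log (1 - conj a * w) - log (1 - w / a)) := by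
  have ha0 : a ≠ 0 := norm_pos_iff.1 ((norm_nonneg w).trans_lt hw)
  have hwa : ‖w / a‖ < 1 := by rwa [norm_div, div_lt_one (norm_pos_iff.2 ha0)]
  have haw : ‖conj a * w‖ < 1 := by
    rw [norm_mul, RCLike.norm_conj]
    nlinarith [norm_nonneg w]
  have h := (hasSum_taylorSeries_neg_log' hwa).sub (hasSum_taylorSeries_neg_log' haw)
  rw [neg_sub_neg] at h
  refine h.congr_fun fun n => ?_
  rw [blaschkeLogTerm, zpow_neg, zpow_natCast, div_pow, mul_pow]
  ring

lemma blaschkeFactor_eq_norm_mul_exp {a w : ℂ} (ha : ‖a‖ ≤ 1) (hw : ‖w‖ < ‖a‖) :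
    ‖a‖ / a * ((a - w) / (1 - conj a * w)) = ‖a‖ * exp (-∑' n, blaschkeLogTerm a w n) := by
  have ha0 : a ≠ 0 := norm_pos_iff.1 ((norm_nonneg w).trans_lt hw)
  have hwa : 1 - w / a ≠ 0 := by
    refine sub_ne_zero.2 fun h => ?_
    rw [eq_div_iff ha0, one_mul] at h
    simp [h] at hw
  have hd := one_sub_conj_mul_ne_zero ha (hw.trans_le ha)
  rw [(hasSum_blaschkeLogTerm ha hw).tsum_eq, neg_sub, exp_sub, exp_log hwa, exp_log hd]
  field_simp

lemma norm_blaschkeLogTerm_le {a w : ℂ} {r : ℝ} (hr : 0 < r) (hra : r ≤ ‖a‖) (ha : ‖a‖ ≤ 1)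
    (n : ℕ) : ‖blaschkeLogTerm a w n‖ ≤ 2 * (1 - ‖a‖) * (‖w‖ / r) ^ (n + 1) := by
  have hn : ‖((n : ℂ) + 1)‖ = n + 1 := by exact_mod_cast norm_natCast (n + 1)
  rw [blaschkeLogTerm, norm_div, norm_mul, norm_pow, hn, div_le_iff₀ (by positivity)]
  calc ‖a ^ (-((n + 1 : ℕ) : ℤ)) - conj a ^ (n + 1)‖ * ‖w‖ ^ (n + 1)
      ≤ 2 * (n + 1 : ℕ) / r ^ (n + 1) * (1 - ‖a‖) * ‖w‖ ^ (n + 1) := by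
        gcongr
        exact norm_zpow_neg_sub_conj_pow_le hr hra ha (n + 1)
    _ = 2 * (1 - ‖a‖) * (‖w‖ / r) ^ (n + 1) * (n + 1) := by
        push_cast
        rw [div_pow]
        field_simp

lemma multipliable_ofReal_of_summable_one_sub {ι : Type*} {x : ι → ℝ}
    (hx : Summable fun i => 1 - x i) : Multipliable fun i => (x i : ℂ) := by
  have h : Summable fun i => ‖((x i : ℂ) - 1)‖ := hx.abs.congr fun i => by
    rw [← ofReal_one, ← ofReal_sub, norm_real, Real.norm_eq_abs, abs_sub_comm]
  simpa using multipliable_one_add_of_summable h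

section

variable {z : ℕ → ℂ} {r : ℝ}

theorem summable_norm_zpow_neg_sub_conj_pow (hr : 0 < r) (hrz : ∀ j, r ≤ ‖z j‖)
    (hz1 : ∀ j, ‖z j‖ ≤ 1) (hsum : Summable fun j => 1 - ‖z j‖) (n : ℕ) :
    Summable fun j => ‖z j ^ (-(n : ℤ)) - conj (z j) ^ n‖ :=
  (hsum.mul_left _).of_nonneg_of_le (fun _ => norm_nonneg _)
    fun j => norm_zpow_neg_sub_conj_pow_le hr (hrz j) (hz1 j) n

theorem norm_blaschkeCoef_le (hr : 0 < r) (hrz : ∀ j, r ≤ ‖z j‖)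
    (hz1 : ∀ j, ‖z j‖ ≤ 1) (hsum : Summable fun j => 1 - ‖z j‖) (n : ℕ) :
    ‖blaschkeCoef z n‖ ≤ 2 / r ^ n * ∑' j, (1 - ‖z j‖) := by
  have hZ : 0 ≤ ∑' j, (1 - ‖z j‖) := tsum_nonneg fun j => by linarith [hz1 j]
  rcases n.eq_zero_or_pos with rfl | hn
  · simpa [blaschkeCoef] using hZ
  have hsum_n := summable_norm_zpow_neg_sub_conj_pow hr hrz hz1 hsum n
  rw [blaschkeCoef, norm_mul, norm_div, norm_one, norm_natCast]
  calc 1 / (n : ℝ) * ‖∑' j, (z j ^ (-(n : ℤ)) - conj (z j) ^ n)‖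
      ≤ 1 / n * ∑' j, 2 * n / r ^ n * (1 - ‖z j‖) := by
        gcongr
        exact (norm_tsum_le_tsum_norm hsum_n).trans <| hsum_n.tsum_le_tsum
          (fun j => norm_zpow_neg_sub_conj_pow_le hr (hrz j) (hz1 j) n) (hsum.mul_left _)
    _ = 2 / r ^ n * ∑' j, (1 - ‖z j‖) := by
        rw [tsum_mul_left]
        field_simp

theorem multipliable_blaschkeTerm (hr : 0 < r) (hrz : ∀ j, r ≤ ‖z j‖) (hz1 : ∀ j, ‖z j‖ ≤ 1)
    (hsum : Summable fun j => 1 - ‖z j‖) {w : ℂ} (hw : ‖w‖ < 1) :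
    Multipliable (blaschkeTerm z w) := by
  have hsub : Summable fun j => ‖blaschkeTerm z w j - 1‖ :=
    (hsum.mul_left _).of_nonneg_of_le (fun _ => norm_nonneg _)
      fun j => norm_blaschkeFactor_sub_one_le hr (hrz j) (hz1 j) hw
  simpa using multipliable_one_add_of_summable hsub

lemma summable_uncurry_blaschkeLogTerm (hr : 0 < r) (hrz : ∀ j, r ≤ ‖z j‖)
    (hz1 : ∀ j, ‖z j‖ ≤ 1) (hsum : Summable fun j => 1 - ‖z j‖) {w : ℂ} (hw : ‖w‖ < r) :
    Summable (Function.uncurry fun j n => blaschkeLogTerm (z j) w n) := by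
  have hgeo : Summable fun n : ℕ => (‖w‖ / r) ^ (n + 1) :=
    (summable_nat_add_iff 1).2 <| summable_geometric_of_lt_one (by positivity)
      ((div_lt_one hr).2 hw)
  refine Summable.of_norm <| ((hsum.mul_left 2).mul_of_nonneg hgeo ?_ ?_).of_nonneg_of_le
    (fun _ => norm_nonneg _) fun p => norm_blaschkeLogTerm_le hr (hrz p.1) (hz1 p.1) p.2
  · exact fun j => by simp only [Pi.zero_apply]; linarith [hz1 j]
  · exact fun n => by positivity

lemma tsum_blaschkeLogTerm (w : ℂ) (n : ℕ) :
    ∑' j, blaschkeLogTerm (z j) w n = blaschkeCoef z (n + 1) * w ^ (n + 1) := by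
  simp only [blaschkeLogTerm, blaschkeCoef, tsum_div_const, tsum_mul_right]
  push_cast
  ring

theorem summable_norm_blaschkeCoef_mul_pow (hr : 0 < r) (hrz : ∀ j, r ≤ ‖z j‖)
    (hz1 : ∀ j, ‖z j‖ ≤ 1) (hsum : Summable fun j => 1 - ‖z j‖) {w : ℂ} (hw : ‖w‖ < r) :
    Summable fun n : ℕ => ‖blaschkeCoef z (n + 1) * w ^ (n + 1)‖ := by
  have hgeo : Summable fun n : ℕ => (‖w‖ / r) ^ (n + 1) :=
    (summable_nat_add_iff 1).2 <| summable_geometric_of_lt_one (by positivity)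
      ((div_lt_one hr).2 hw)
  refine (hgeo.mul_left (2 * ∑' j, (1 - ‖z j‖))).of_nonneg_of_le (fun _ => norm_nonneg _)
    fun n => ?_
  rw [norm_mul, norm_pow]
  calc ‖blaschkeCoef z (n + 1)‖ * ‖w‖ ^ (n + 1)
      ≤ 2 / r ^ (n + 1) * (∑' j, (1 - ‖z j‖)) * ‖w‖ ^ (n + 1) := by
        gcongr
        exact norm_blaschkeCoef_le hr hrz hz1 hsum (n + 1)
    _ = 2 * (∑' j, (1 - ‖z j‖)) * (‖w‖ / r) ^ (n + 1) := by
        rw [div_pow]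
        field_simp

theorem hasProd_blaschkeTerm (hr : 0 < r) (hrz : ∀ j, r ≤ ‖z j‖)
    (hz1 : ∀ j, ‖z j‖ ≤ 1) (hsum : Summable fun j => 1 - ‖z j‖) {w : ℂ} (hw : ‖w‖ < r) :
    HasProd (blaschkeTerm z w)
      ((∏' j, (‖z j‖ : ℂ)) * exp (-∑' n, blaschkeCoef z (n + 1) * w ^ (n + 1))) := by
  have hF := summable_uncurry_blaschkeLogTerm hr hrz hz1 hsum hw
  have hlog : ∑' j, ∑' n, blaschkeLogTerm (z j) w n
      = ∑' n, blaschkeCoef z (n + 1) * w ^ (n + 1) := by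
    simp only [← hF.tsum_comm, tsum_blaschkeLogTerm]
  rw [← hlog]
  refine ((multipliable_ofReal_of_summable_one_sub hsum).hasProd.mul hF.prod.hasSum.neg.cexp).congr_fun fun j => ?_
  exact blaschkeFactor_eq_norm_mul_exp (hz1 j) (hw.trans_le (hrz j))

end

theorem statement12_general (z : ℕ → ℂ) (hz1 : ∀ j, ‖z j‖ < 1)
    (r₀ : ℝ) (hr₀ : r₀ = ⨅ j, ‖z j‖) (hr₀pos : 0 < r₀)
    (hsum : Summable (fun j => 1 - ‖z j‖)) :
    (∀ n : ℕ, 1 ≤ n →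
      Summable (fun j => ‖(z j) ^ (-(n : ℤ)) - (starRingEnd ℂ) (z j) ^ n‖) ∧
      ‖blaschkeCoef z n‖ ≤ (2 / r₀ ^ n) * ∑' j : ℕ, (1 - ‖z j‖)) ∧
    (∀ w : ℂ, ‖w‖ < 1 → Multipliable (blaschkeTerm z w)) ∧
    (∀ w : ℂ, ‖w‖ < r₀ →
      Summable (fun n : ℕ => ‖blaschkeCoef z (n + 1) * w ^ (n + 1)‖) ∧
      (∏' j : ℕ, blaschkeTerm z w j)
        = (∏' j : ℕ, (‖z j‖ : ℂ)) *
            Complex.exp (-(∑' n : ℕ, blaschkeCoef z (n + 1) * w ^ (n + 1)))) := by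
  have hrz : ∀ j, r₀ ≤ ‖z j‖ := fun j =>
    hr₀ ▸ ciInf_le ⟨0, by rintro _ ⟨i, rfl⟩; exact norm_nonneg _⟩ j
  have hz1' : ∀ j, ‖z j‖ ≤ 1 := fun j => (hz1 j).le
  refine ⟨fun n _ => ⟨summable_norm_zpow_neg_sub_conj_pow hr₀pos hrz hz1' hsum n,
      norm_blaschkeCoef_le hr₀pos hrz hz1' hsum n⟩,
    fun w hw => multipliable_blaschkeTerm hr₀pos hrz hz1' hsum hw,
    fun w hw => ⟨summable_norm_blaschkeCoef_mul_pow hr₀pos hrz hz1' hsum hw,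
      (hasProd_blaschkeTerm hr₀pos hrz hz1' hsum hw).tprod_eq⟩⟩

/-- For a sequence `(z_j)` in `𝔻 \ {0}` with `r₀ = inf |z_j| > 0` and
`Z = ∑ (1 - |z_j|) < ∞`: each `B_n` converges absolutely with `|B_n| ≤ (2/r₀ⁿ)Z`; the
Blaschke product converges on `𝔻`; and for `|w| < r₀`,
`B(w) = (∏ |z_j|)·exp(-∑_{n≥1} B_n wⁿ)` with the series converging absolutely. -/
theorem statement12 (z : ℕ → ℂ) (hz1 : ∀ j, ‖z j‖ < 1) (hz0 : ∀ j, z j ≠ 0)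
    (r₀ : ℝ) (hr₀ : r₀ = ⨅ j, ‖z j‖) (hr₀pos : 0 < r₀)
    (hsum : Summable (fun j => 1 - ‖z j‖)) :
    (∀ n : ℕ, 1 ≤ n →
      Summable (fun j => ‖(z j) ^ (-(n : ℤ)) - (starRingEnd ℂ) (z j) ^ n‖) ∧
      ‖blaschkeCoef z n‖ ≤ (2 / r₀ ^ n) * ∑' j : ℕ, (1 - ‖z j‖)) ∧
    (∀ w : ℂ, ‖w‖ < 1 → Multipliable (blaschkeTerm z w)) ∧
    (∀ w : ℂ, ‖w‖ < r₀ →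
      Summable (fun n : ℕ => ‖blaschkeCoef z (n + 1) * w ^ (n + 1)‖) ∧
      (∏' j : ℕ, blaschkeTerm z w j)
        = (∏' j : ℕ, (‖z j‖ : ℂ)) *
            Complex.exp (-(∑' n : ℕ, blaschkeCoef z (n + 1) * w ^ (n + 1)))) :=
  statement12_general z hz1 r₀ hr₀ hr₀pos hsum
end
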